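/- If the conformal lattice parameter τ is purely imaginary (rectangular lattice of unit coarea), then area(g) − sys(g)² ≥ Var(f), since in that case Im(τ) = σ² ≥ 1. -/

import Mathlib

/-!
The variance of the conformal factor is `area − mean²`, so it suffices to show `sys ≤ mean`.
Every horizontal loop `u ↦ u v₁ + t v₂` is noncontractible, of length `|v₁| ∫₀¹ f(u v₁ + t v₂) du`,
and averaging over `t` shows that the systole is at most `|v₁| · mean`. For the rectangular lattice
of unit coarea `|v₁| = s^{-1/2} ≤ 1`.
-/

/-- Euclidean norm on `ℝ × ℝ`. -/
noncomputable def eNorm (p : ℝ × ℝ) : ℝ := Real.sqrt (p.1 ^ 2 + p.2 ^ 2)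

/-- Integral of a doubly periodic function over the fundamental domain
`{s v₁ + t v₂ : s, t ∈ [0,1]}` of the lattice `ℤv₁ + ℤv₂` (of unit coarea). -/
noncomputable def torusInt (F : ℝ × ℝ → ℝ) (v₁ v₂ : ℝ × ℝ) : ℝ :=
  ∫ s in (0:ℝ)..1, ∫ t in (0:ℝ)..1, F (s • v₁ + t • v₂)

/-- Area of the torus with metric `f²(dx² + dy²)`. -/
noncomputable def torusArea (f : ℝ × ℝ → ℝ) (v₁ v₂ : ℝ × ℝ) : ℝ :=
  torusInt (fun p => (f p) ^ 2) v₁ v₂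

/-- Mean of the conformal factor over the flat probability measure. -/
noncomputable def torusMean (f : ℝ × ℝ → ℝ) (v₁ v₂ : ℝ × ℝ) : ℝ :=
  torusInt f v₁ v₂

/-- Variance of the conformal factor over the flat probability measure. -/
noncomputable def torusVar (f : ℝ × ℝ → ℝ) (v₁ v₂ : ℝ × ℝ) : ℝ :=
  torusInt (fun p => (f p - torusMean f v₁ v₂) ^ 2) v₁ v₂

/-- The systole of the torus `ℝ²/(ℤv₁ + ℤv₂)` with metric `f²(dx² + dy²)`:
the least `f`-length of a `C¹` loop which is noncontractible, i.e. lifts to a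
path whose endpoints differ by a nonzero lattice vector. -/
noncomputable def torusSys (f : ℝ × ℝ → ℝ) (v₁ v₂ : ℝ × ℝ) : ℝ :=
  sInf {ℓ : ℝ | ∃ γ : ℝ → ℝ × ℝ, ContDiff ℝ 1 γ ∧
    (∃ m n : ℤ, γ 1 - γ 0 = m • v₁ + n • v₂ ∧ ¬(m = 0 ∧ n = 0)) ∧
    ℓ = ∫ t in (0:ℝ)..1, f (γ t) * eNorm (deriv γ t)}

open MeasureTheory Set

lemma intervalIntegral_intervalIntegral_swap_of_continuous {F : ℝ × ℝ → ℝ} (hF : Continuous F)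
    (a b c d : ℝ) :
    ∫ x in a..b, ∫ y in c..d, F (x, y) = ∫ y in c..d, ∫ x in a..b, F (x, y) :=
  intervalIntegral_intervalIntegral_swap <|
    (hF.continuousOn.integrableOn_compact (isCompact_uIcc.prod isCompact_uIcc)).mono_set
      (prod_mono uIoc_subset_uIcc uIoc_subset_uIcc)

section TorusIntegral

variable {F G : ℝ × ℝ → ℝ} {v₁ v₂ : ℝ × ℝ}

lemma continuous_intervalIntegral_torus (hF : Continuous F) :
    Continuous fun a : ℝ => ∫ b in (0:ℝ)..1, F (a • v₁ + b • v₂) :=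
  intervalIntegral.continuous_parametric_intervalIntegral_of_continuous'
    (f := fun a b : ℝ => F (a • v₁ + b • v₂)) (by fun_prop) 0 1

lemma torusInt_add (hF : Continuous F) (hG : Continuous G) :
    torusInt (fun p => F p + G p) v₁ v₂ = torusInt F v₁ v₂ + torusInt G v₁ v₂ := by
  unfold torusInt
  have hInner (H : ℝ × ℝ → ℝ) (hH : Continuous H) (a : ℝ) :
      IntervalIntegrable (fun b : ℝ => H (a • v₁ + b • v₂)) volume 0 1 :=
    (hH.comp (by fun_prop)).intervalIntegrable 0 1
  simp_rw [intervalIntegral.integral_add (hInner F hF _) (hInner G hG _)]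
  exact intervalIntegral.integral_add ((continuous_intervalIntegral_torus hF).intervalIntegrable 0 1)
    ((continuous_intervalIntegral_torus hG).intervalIntegrable 0 1)

lemma torusInt_const_mul (c : ℝ) (F : ℝ × ℝ → ℝ) :
    torusInt (fun p => c * F p) v₁ v₂ = c * torusInt F v₁ v₂ := by
  simp [torusInt, intervalIntegral.integral_const_mul]

lemma torusInt_const (c : ℝ) : torusInt (fun _ => c) v₁ v₂ = c := by
  simp [torusInt]

lemma torusInt_nonneg (hF : ∀ p, 0 ≤ F p) : 0 ≤ torusInt F v₁ v₂ :=
  intervalIntegral.integral_nonneg zero_le_one fun _ _ =>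
    intervalIntegral.integral_nonneg zero_le_one fun _ _ => hF _

end TorusIntegral

section ConformalFactor

variable {f : ℝ × ℝ → ℝ} {v₁ v₂ : ℝ × ℝ}

lemma torusVar_eq_torusArea_sub_sq (hf : Continuous f) :
    torusVar f v₁ v₂ = torusArea f v₁ v₂ - torusMean f v₁ v₂ ^ 2 := by
  set m := torusMean f v₁ v₂
  have hexpand : (fun p => (f p - m) ^ 2) = fun p => (f p ^ 2 + (-2 * m) * f p) + m ^ 2 := by
    ext p; ring
  rw [torusVar, hexpand, torusInt_add (by fun_prop) continuous_const,
    torusInt_add (by fun_prop) (by fun_prop), torusInt_const_mul, torusInt_const, torusArea]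
  change _ + -2 * m * m + m ^ 2 = _
  ring

lemma curveLength_nonneg (hf : ∀ p, 0 ≤ f p) (γ : ℝ → ℝ × ℝ) :
    0 ≤ ∫ t in (0:ℝ)..1, f (γ t) * eNorm (deriv γ t) :=
  intervalIntegral.integral_nonneg zero_le_one fun _ _ => mul_nonneg (hf _) (Real.sqrt_nonneg _)

lemma torusSys_nonneg (hf : ∀ p, 0 ≤ f p) : 0 ≤ torusSys f v₁ v₂ :=
  Real.sInf_nonneg <| by
    rintro ℓ ⟨γ, -, -, rfl⟩
    exact curveLength_nonneg hf γ

lemma torusSys_le_horizontal (hf : ∀ p, 0 ≤ f p) (t : ℝ) :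
    torusSys f v₁ v₂ ≤ eNorm v₁ * ∫ u in (0:ℝ)..1, f (u • v₁ + t • v₂) := by
  refine csInf_le ⟨0, ?_⟩ ⟨fun u => u • v₁ + t • v₂, by fun_prop, ⟨1, 0, by simp, by simp⟩, ?_⟩
  · rintro ℓ ⟨γ, -, -, rfl⟩
    exact curveLength_nonneg hf γ
  have hderiv (u : ℝ) : deriv (fun u : ℝ => u • v₁ + t • v₂) u = v₁ := by
    simpa using (((hasDerivAt_id u).smul_const v₁).add_const (t • v₂)).deriv
  simp_rw [hderiv, ← intervalIntegral.integral_const_mul, mul_comm]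

lemma torusSys_le_eNorm_mul_torusMean (hf : Continuous f) (hf₀ : ∀ p, 0 ≤ f p) :
    torusSys f v₁ v₂ ≤ eNorm v₁ * torusMean f v₁ v₂ := by
  have hL : Continuous fun t : ℝ => ∫ u in (0:ℝ)..1, f (u • v₁ + t • v₂) :=
    intervalIntegral.continuous_parametric_intervalIntegral_of_continuous'
      (f := fun t u : ℝ => f (u • v₁ + t • v₂)) (by fun_prop) 0 1
  calc torusSys f v₁ v₂ = ∫ _ in (0:ℝ)..1, torusSys f v₁ v₂ := by simp
    _ ≤ ∫ t in (0:ℝ)..1, eNorm v₁ * ∫ u in (0:ℝ)..1, f (u • v₁ + t • v₂) :=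
      intervalIntegral.integral_mono_on zero_le_one intervalIntegrable_const
        ((continuous_const.mul hL).intervalIntegrable 0 1)
        fun t _ => torusSys_le_horizontal hf₀ t
    _ = eNorm v₁ * torusMean f v₁ v₂ := by
      rw [intervalIntegral.integral_const_mul, torusMean, torusInt,
        intervalIntegral_intervalIntegral_swap_of_continuous
          (F := fun p : ℝ × ℝ => f (p.1 • v₁ + p.2 • v₂)) (by fun_prop)]

end ConformalFactor

theorem loewner_with_defect_rectangular_general (s : ℝ) (hs : 1 ≤ s)
    (v₁ v₂ : ℝ × ℝ)
    (hv₁ : v₁ = (Real.sqrt s)⁻¹ • ((1:ℝ), (0:ℝ)))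
    (f : ℝ × ℝ → ℝ) (hf : Continuous f) (hpos : ∀ p, 0 < f p) :
    torusArea f v₁ v₂ - (torusSys f v₁ v₂) ^ 2 ≥ torusVar f v₁ v₂ := by
  have hf₀ : ∀ p, 0 ≤ f p := fun p => (hpos p).le
  have hv₁_le : eNorm v₁ ≤ 1 := by
    have hsqrt : 1 ≤ Real.sqrt s := Real.one_le_sqrt.2 hs
    rw [hv₁, eNorm]
    simp [inv_le_one_of_one_le₀ hsqrt]
  have hmean : 0 ≤ torusMean f v₁ v₂ := torusInt_nonneg hf₀
  have hsys : torusSys f v₁ v₂ ≤ torusMean f v₁ v₂ :=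
    (torusSys_le_eNorm_mul_torusMean hf hf₀).trans (mul_le_of_le_one_left hmean hv₁_le)
  have hsq := pow_le_pow_left₀ (torusSys_nonneg hf₀) hsys 2
  rw [torusVar_eq_torusArea_sub_sq hf]
  linarith

/-- Rectangular lattice case: if `τ = i·s` is purely imaginary with `s ≥ 1`,
then `area(g) − sys(g)² ≥ Var(f)`. -/
theorem loewner_with_defect_rectangular (s : ℝ) (hs : 1 ≤ s)
    (v₁ v₂ : ℝ × ℝ)
    (hv₁ : v₁ = (Real.sqrt s)⁻¹ • ((1:ℝ), (0:ℝ)))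
    (hv₂ : v₂ = (Real.sqrt s)⁻¹ • ((0:ℝ), s))
    (f : ℝ × ℝ → ℝ) (hf : Continuous f) (hpos : ∀ p, 0 < f p)
    (hper₁ : ∀ p, f (p + v₁) = f p) (hper₂ : ∀ p, f (p + v₂) = f p) :
    torusArea f v₁ v₂ - (torusSys f v₁ v₂) ^ 2 ≥ torusVar f v₁ v₂ :=
  loewner_with_defect_rectangular_general s hs v₁ v₂ hv₁ f hf hpos
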